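/- arXiv:2006.14287 — 2 statements merged into one kernel-verified Lean document; each statement's English description precedes it below -/
import Mathlib

section
/- For every positive integer e, we have 2·∑_{k=1}^{e} k·N(e,k) = (e+1)·C_e, where N(e,k) is the Narayana number and C_e is the Catalan number. -/
/-!
Since `k · C(e, k) = e · C(e - 1, k - 1)`, the sum `∑ k · N(e, k)` equals
`∑_j C(e - 1, j) · C(e, j) = C(2e - 1, e - 1)` by Vandermonde's identity, and
`2 · C(2e - 1, e - 1) = C(2e, e) = (e + 1) · C_e`.
-/

open Finset

namespace Nat

theorem sum_range_choose_mul_choose (m n : ℕ) :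
    ∑ i ∈ range (m + 1), m.choose i * n.choose i = (m + n).choose m := by
  rw [add_comm m n, add_choose_eq, Finset.Nat.sum_antidiagonal_eq_sum_range_succ_mk]
  refine sum_congr rfl fun i hi => ?_
  rw [choose_symm (mem_range_succ_iff.mp hi), mul_comm]

theorem sum_Icc_mul_choose_mul_choose_pred (m n : ℕ) :
    ∑ k ∈ Icc 1 (m + 1), k * ((m + 1).choose k * n.choose (k - 1)) =
      (m + 1) * (m + n).choose m := by
  rw [← Ico_add_one_right_eq_Icc, sum_Ico_eq_sum_range, ← sum_range_choose_mul_choose,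
    mul_sum]
  refine sum_congr (by simp) fun j _ => ?_
  rw [add_comm 1 j, Nat.add_sub_cancel, ← mul_assoc, mul_comm (j + 1),
    ← add_one_mul_choose_eq, mul_assoc]

theorem two_mul_choose_odd (n : ℕ) :
    2 * (2 * n + 1).choose n = (2 * (n + 1)).choose (n + 1) := by
  rw [show 2 * (n + 1) = 2 * n + 1 + 1 by ring, choose_succ_succ, choose_symm_half, two_mul]

end Nat

/-- `2 ∑_{k=1}^e k·N(e,k) = (e+1)·C_e`. -/
theorem two_sum_k_narayana (e : ℕ) (he : 0 < e) :
    2 * ∑ k ∈ Finset.Icc 1 e,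
        (k : ℚ) * ((1 / (e : ℚ)) * (e.choose k) * (e.choose (k - 1)))
      = ((e : ℚ) + 1) * ((1 / ((e : ℚ) + 1)) * ((2 * e).choose e)) := by
  obtain ⟨n, rfl⟩ := Nat.exists_eq_add_one_of_ne_zero he.ne'
  have hsum : ∑ k ∈ Icc 1 (n + 1), (k : ℚ) * ((n + 1).choose k * (n + 1).choose (k - 1)) =
      (n + 1) * (2 * n + 1).choose n := by
    have h := Nat.sum_Icc_mul_choose_mul_choose_pred n (n + 1)
    rw [← add_assoc, ← two_mul] at h
    exact_mod_cast h
  have hcentral : 2 * ((2 * n + 1).choose n : ℚ) = (2 * (n + 1)).choose (n + 1) := by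
    exact_mod_cast Nat.two_mul_choose_odd n
  calc 2 * ∑ k ∈ Icc 1 (n + 1),
        (k : ℚ) * ((1 / ((n + 1 : ℕ) : ℚ)) * ((n + 1).choose k) * ((n + 1).choose (k - 1)))
      = 2 / (n + 1) * ∑ k ∈ Icc 1 (n + 1),
          (k : ℚ) * ((n + 1).choose k * (n + 1).choose (k - 1)) := by
        rw [mul_sum, mul_sum]
        refine sum_congr rfl fun k _ => ?_
        push_cast
        ring
    _ = (2 * (n + 1)).choose (n + 1) := by
        rw [hsum, ← hcentral]
        field_simp
    _ = _ := by
        field_simp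
end

section
/- The number of non-crossing partitions of the set {1, 2, ..., n} equals the Catalan number C_n = (1/(n+1))·C(2n,n). -/
/-- A "block function" presentation of a partition of `{1,…,n}` (as `Fin n`):
`p i` is the block containing `i`. -/
def IsPartitionFun (n : ℕ) (p : Fin n → Finset (Fin n)) : Prop :=
  (∀ i, i ∈ p i) ∧ ∀ i j, p i = p j ∨ p i ∩ p j = ∅

/-- The partition is non-crossing: there are no `a < x < b < y` with `a, b` in one
block and `x, y` in a different block. -/
def IsNonCrossingFun (n : ℕ) (p : Fin n → Finset (Fin n)) : Prop :=
  ¬ ∃ a x b y : Fin n, a < x ∧ x < b ∧ b < y ∧ p a = p b ∧ p x = p y ∧ p a ≠ p x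

/-!
Encode a partition of `{0, …, n-1}` as a partial equivalence relation on `ℕ` with domain
`{0, …, n-1}`. In a non-crossing partition of `{0, …, n}`, let `i + 1` be the least positive
element of the block of `0` (or `n + 1` if that block is `{0}`). Non-crossing forces `{1, …, i}`
to be a union of blocks, so the partition is an arbitrary non-crossing partition of `{1, …, i}`
glued to an arbitrary non-crossing partition of `{i + 1, …, n}` in which `0` joins the block of
`i + 1`. Conversely every such gluing is non-crossing, which gives the Catalan recurrence
`C (n + 1) = ∑ i ≤ n, C i * C (n - i)`.
-/

structure IsPartitionRel (n : ℕ) (r : ℕ → ℕ → Prop) : Prop where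
  refl : ∀ a < n, r a a
  symm : ∀ {a b}, r a b → r b a
  trans : ∀ {a b c}, r a b → r b c → r a c
  lt : ∀ {a b}, r a b → a < n ∧ b < n

def IsNonCrossingRel (r : ℕ → ℕ → Prop) : Prop :=
  ∀ ⦃a x b y⦄, a < x → x < b → b < y → r a b → r x y → r a x

abbrev NonCrossingRel (n : ℕ) : Type :=
  {r : ℕ → ℕ → Prop // IsPartitionRel n r ∧ IsNonCrossingRel r}

section BlockFunction

variable {n : ℕ}

theorem IsPartitionFun.eq_iff_mem {p : Fin n → Finset (Fin n)} (hp : IsPartitionFun n p)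
    {i k : Fin n} : p i = p k ↔ k ∈ p i := by
  refine ⟨fun h => h ▸ hp.1 k, fun h => (hp.2 i k).resolve_right fun hik => ?_⟩
  simpa [hik] using Finset.mem_inter.2 ⟨h, hp.1 k⟩

def relOfBlocks (p : Fin n → Finset (Fin n)) (a b : ℕ) : Prop :=
  ∃ (ha : a < n) (hb : b < n), p ⟨a, ha⟩ = p ⟨b, hb⟩

noncomputable def blocksOfRel (r : ℕ → ℕ → Prop) (i : Fin n) : Finset (Fin n) :=
  open Classical in Finset.univ.filter fun k => r i k

@[simp]
theorem mem_blocksOfRel {r : ℕ → ℕ → Prop} {i k : Fin n} : k ∈ blocksOfRel r i ↔ r i k := by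
  simp [blocksOfRel]

theorem IsPartitionRel.blocksOfRel_eq_iff {r : ℕ → ℕ → Prop} (hr : IsPartitionRel n r)
    {i k : Fin n} : blocksOfRel r i = blocksOfRel r k ↔ r i k := by
  refine ⟨fun h => ?_, fun h => Finset.ext fun l => ?_⟩
  · have hk : k ∈ blocksOfRel r k := mem_blocksOfRel.2 (hr.refl k k.isLt)
    rwa [← h, mem_blocksOfRel] at hk
  · simp only [mem_blocksOfRel]
    exact ⟨hr.trans (hr.symm h), hr.trans h⟩

noncomputable def nonCrossingRelEquiv (n : ℕ) :
    {p : Fin n → Finset (Fin n) // IsPartitionFun n p ∧ IsNonCrossingFun n p} ≃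
      NonCrossingRel n where
  toFun p := ⟨relOfBlocks p.1,
    { refl := fun a ha => ⟨ha, ha, rfl⟩
      symm := fun ⟨ha, hb, h⟩ => ⟨hb, ha, h.symm⟩
      trans := fun ⟨ha, _, h⟩ ⟨_, hc, h'⟩ => ⟨ha, hc, h.trans h'⟩
      lt := fun ⟨ha, hb, _⟩ => ⟨ha, hb⟩ },
    fun a x b y hax hxb hby ⟨ha, hb, hab⟩ ⟨hx, hy, hxy⟩ => ⟨ha, hx, by_contra fun hne =>
      p.2.2 ⟨⟨a, ha⟩, ⟨x, hx⟩, ⟨b, hb⟩, ⟨y, hy⟩, hax, hxb, hby, hab, hxy, hne⟩⟩⟩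
  invFun r := ⟨blocksOfRel r.1, by
    obtain ⟨hr, nc⟩ := r.2
    refine ⟨⟨fun i => by simpa using hr.refl i i.isLt, fun i k => ?_⟩, ?_⟩
    · by_cases h : r.1 i k
      · exact .inl (hr.blocksOfRel_eq_iff.2 h)
      · refine .inr (Finset.eq_empty_of_forall_notMem fun l hl => h ?_)
        simp only [Finset.mem_inter, mem_blocksOfRel] at hl
        exact hr.trans hl.1 (hr.symm hl.2)
    · rintro ⟨a, x, b, y, hax, hxb, hby, hab, hxy, hne⟩
      simp only [hr.blocksOfRel_eq_iff] at hab hxy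
      exact hne (hr.blocksOfRel_eq_iff.2 (nc hax hxb hby hab hxy))⟩
  left_inv p := Subtype.ext <| funext fun i => Finset.ext fun k => by
    simp [relOfBlocks, p.2.1.eq_iff_mem]
  right_inv r := Subtype.ext <| funext fun a => funext fun b => propext <| by
    simp only [relOfBlocks, r.2.1.blocksOfRel_eq_iff]
    exact ⟨fun ⟨_, _, h⟩ => h, fun h => ⟨(r.2.1.lt h).1, (r.2.1.lt h).2, h⟩⟩

instance (n : ℕ) : Finite (NonCrossingRel n) :=
  Finite.of_equiv _ (nonCrossingRelEquiv n)

end BlockFunction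

theorem card_nonCrossingRel_zero : Nat.card (NonCrossingRel 0) = 1 := by
  have empty (r : NonCrossingRel 0) : r.1 = fun _ _ => False := funext fun a => funext fun b =>
    propext ⟨fun h => absurd (r.2.1.lt h).1 a.not_lt_zero, False.elim⟩
  refine Nat.card_eq_one_iff_exists.2 ⟨⟨fun _ _ => False, ?_, ?_⟩, fun r => Subtype.ext (empty r)⟩
  · exact ⟨fun a ha => absurd ha a.not_lt_zero, id, False.elim, False.elim⟩
  · exact fun _ _ _ _ _ _ _ h => h.elim

theorem IsPartitionRel.rel_sub_add_iff {m k a b : ℕ} {r : ℕ → ℕ → Prop}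
    (hr : IsPartitionRel m r) (h0 : r 0 k) (ha : a = 0 ∨ k ≤ a) (hb : b = 0 ∨ k ≤ b) :
    r (a - k + k) (b - k + k) ↔ r a b := by
  have hk : r k 0 := hr.symm h0
  rcases ha with rfl | ha <;> rcases hb with rfl | hb <;>
    simp only [zero_tsub, zero_add, Nat.sub_add_cancel, *]
  · exact ⟨fun _ => hr.trans h0 hk, fun _ => hr.trans hk h0⟩
  · exact ⟨hr.trans h0, hr.trans hk⟩
  · exact ⟨fun h => hr.trans h hk, fun h => hr.trans h h0⟩

noncomputable def firstPartner (n : ℕ) (r : ℕ → ℕ → Prop) : ℕ :=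
  sInf {k | 0 < k ∧ (r 0 k ∨ k = n + 1)}

section FirstPartner

variable {n k : ℕ} {r : ℕ → ℕ → Prop}

theorem firstPartner_spec :
    0 < firstPartner n r ∧ (r 0 (firstPartner n r) ∨ firstPartner n r = n + 1) :=
  Nat.sInf_mem (s := {k | 0 < k ∧ (r 0 k ∨ k = n + 1)}) ⟨n + 1, n.succ_pos, .inr rfl⟩

theorem firstPartner_le : firstPartner n r ≤ n + 1 :=
  Nat.sInf_le ⟨n.succ_pos, .inr rfl⟩

theorem firstPartner_le_of_rel (hk : 0 < k) (h : r 0 k) : firstPartner n r ≤ k :=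
  Nat.sInf_le ⟨hk, .inl h⟩

theorem rel_zero_firstPartner (h : firstPartner n r ≤ n) : r 0 (firstPartner n r) :=
  firstPartner_spec.2.resolve_right (by omega)

theorem IsNonCrossingRel.rel_lt_firstPartner (hr : IsPartitionRel (n + 1) r)
    (nc : IsNonCrossingRel r) {x y : ℕ} (hx : 0 < x) (hxj : x < firstPartner n r)
    (hxy : r x y) : 0 < y ∧ y < firstPartner n r := by
  have not_rel_zero : ¬ r 0 x := fun h => (firstPartner_le_of_rel hx h).not_gt hxj
  refine ⟨Nat.pos_of_ne_zero fun hy => not_rel_zero (hr.symm (hy ▸ hxy)), ?_⟩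
  by_contra! hjy
  have hj : r 0 (firstPartner n r) := rel_zero_firstPartner (by have := (hr.lt hxy).2; omega)
  rcases hjy.eq_or_lt with rfl | hjy
  · exact not_rel_zero (hr.trans hj (hr.symm hxy))
  · exact not_rel_zero (nc (by omega) hxj hjy hj hxy)

end FirstPartner

def innerRel (i : ℕ) (r : ℕ → ℕ → Prop) (x y : ℕ) : Prop :=
  r (x + 1) (y + 1) ∧ x < i ∧ y < i

def outerRel (i : ℕ) (r : ℕ → ℕ → Prop) (x y : ℕ) : Prop :=
  r (x + (i + 1)) (y + (i + 1))

/-- Since `0 - (i + 1) = 0` in `ℕ`, the last disjunct puts `0` into the block of `i + 1`. -/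
def glue (i : ℕ) (r₁ r₂ : ℕ → ℕ → Prop) (a b : ℕ) : Prop :=
  (a = 0 ∧ b = 0) ∨ (0 < a ∧ 0 < b ∧ r₁ (a - 1) (b - 1)) ∨
    ((a = 0 ∨ i < a) ∧ (b = 0 ∨ i < b) ∧ r₂ (a - (i + 1)) (b - (i + 1)))

section Split

variable {n i : ℕ} {r r₁ r₂ : ℕ → ℕ → Prop}

theorem IsPartitionRel.innerRel (hr : IsPartitionRel (n + 1) r) (hi : i ≤ n) :
    IsPartitionRel i (innerRel i r) where
  refl x hx := ⟨hr.refl _ (by omega), hx, hx⟩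
  symm := fun ⟨h, hx, hy⟩ => ⟨hr.symm h, hy, hx⟩
  trans := fun ⟨h, hx, _⟩ ⟨h', _, hz⟩ => ⟨hr.trans h h', hx, hz⟩
  lt := fun ⟨_, hx, hy⟩ => ⟨hx, hy⟩

theorem IsPartitionRel.outerRel (hr : IsPartitionRel (n + 1) r) :
    IsPartitionRel (n - i) (outerRel i r) where
  refl x hx := hr.refl _ (by omega)
  symm := hr.symm
  trans := hr.trans
  lt h := by have := hr.lt h; omega

theorem IsNonCrossingRel.innerRel (nc : IsNonCrossingRel r) : IsNonCrossingRel (innerRel i r) :=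
  fun _ _ _ _ hax hxb hby ⟨hab, ha, _⟩ ⟨hxy, hx, _⟩ =>
    ⟨nc (by omega) (by omega) (by omega) hab hxy, ha, hx⟩

theorem IsNonCrossingRel.outerRel (nc : IsNonCrossingRel r) : IsNonCrossingRel (outerRel i r) :=
  fun _ _ _ _ hax hxb hby => nc (by omega) (by omega) (by omega)

theorem IsPartitionRel.glue (h₁ : IsPartitionRel i r₁) (h₂ : IsPartitionRel (n - i) r₂)
    (hi : i ≤ n) : IsPartitionRel (n + 1) (glue i r₁ r₂) where
  refl a ha := by
    rcases Nat.eq_zero_or_pos a with rfl | ha0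
    · exact .inl ⟨rfl, rfl⟩
    rcases le_or_gt a i with hai | hai
    · exact .inr (.inl ⟨ha0, ha0, h₁.refl _ (by omega)⟩)
    · exact .inr (.inr ⟨.inr hai, .inr hai, h₂.refl _ (by omega)⟩)
  symm := by
    rintro a b (⟨ha, hb⟩ | ⟨ha, hb, h⟩ | ⟨ha, hb, h⟩)
    · exact .inl ⟨hb, ha⟩
    · exact .inr (.inl ⟨hb, ha, h₁.symm h⟩)
    · exact .inr (.inr ⟨hb, ha, h₂.symm h⟩)
  trans := by
    rintro a b c (⟨ha, hb⟩ | ⟨ha, hb, h⟩ | ⟨ha, hb, h⟩)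
      (⟨hb', hc⟩ | ⟨hb', hc, h'⟩ | ⟨hb', hc, h'⟩)
    · exact .inl ⟨ha, hc⟩
    -- in the mixed cases `b` would lie both in `{1, …, i}` and outside it
    all_goals try have := h₁.lt h
    all_goals try have := h₁.lt h'
    all_goals try omega
    · exact .inr (.inr ⟨.inl ha, hc, by simpa [ha, hb] using h'⟩)
    · exact .inr (.inl ⟨ha, hc, h₁.trans h h'⟩)
    · exact .inr (.inr ⟨ha, .inl hc, by simpa [hb', hc] using h⟩)
    · exact .inr (.inr ⟨ha, hc, h₂.trans h h'⟩)
  lt := by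
    rintro a b (⟨rfl, rfl⟩ | ⟨-, -, h⟩ | ⟨-, -, h⟩)
    · omega
    · have := h₁.lt h; omega
    · have := h₂.lt h; omega

theorem IsNonCrossingRel.glue (h₁ : IsPartitionRel i r₁) (h₂ : IsPartitionRel (n - i) r₂)
    (nc₁ : IsNonCrossingRel r₁) (nc₂ : IsNonCrossingRel r₂) :
    IsNonCrossingRel (glue i r₁ r₂) := by
  intro a x b y hax hxb hby hab hxy
  rcases hab with ⟨ha, hb⟩ | ⟨ha, hb, hab⟩ | ⟨ha, hb, hab⟩ <;>
    rcases hxy with ⟨hx, hy⟩ | ⟨hx, hy, hxy⟩ | ⟨hx, hy, hxy⟩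
  -- the mixed cases would interleave `{1, …, i}` with its complement
  all_goals try have := h₁.lt hab
  all_goals try have := h₁.lt hxy
  all_goals try omega
  · exact .inr (.inl ⟨by omega, hx, nc₁ (by omega) (by omega) (by omega) hab hxy⟩)
  · refine .inr (.inr ⟨ha, hx, ?_⟩)
    -- `a = 0` and `x = i + 1` shift to the same point `0`
    rcases (show a - (i + 1) = x - (i + 1) ∨ a - (i + 1) < x - (i + 1) by omega) with h | h
    · rw [← h]
      exact h₂.refl _ (h₂.lt hab).1
    · exact nc₂ h (by omega) (by omega) hab hxy

theorem glue_innerRel_outerRel (hr : IsPartitionRel (n + 1) r) (nc : IsNonCrossingRel r)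
    (hj : firstPartner n r = i + 1) : glue i (innerRel i r) (outerRel i r) = r := by
  have rel_zero : i < n → r 0 (i + 1) := fun h => hj ▸ rel_zero_firstPartner (by omega)
  have closed : ∀ {x y}, 0 < x → x ≤ i → r x y → 0 < y ∧ y ≤ i := fun hx hxi hxy => by
    have := nc.rel_lt_firstPartner hr hx (by omega) hxy; omega
  funext a b
  apply propext
  constructor
  · rintro (⟨rfl, rfl⟩ | ⟨ha, hb, h, -, -⟩ | ⟨ha, hb, h⟩)
    · exact hr.refl 0 (by omega)
    · rwa [Nat.sub_add_cancel ha, Nat.sub_add_cancel hb] at h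
    · have := hr.lt h
      exact (hr.rel_sub_add_iff (rel_zero (by omega)) (by omega) (by omega)).1 h
  · intro h
    have := hr.lt h
    by_cases hin : 0 < a ∧ a ≤ i ∨ 0 < b ∧ b ≤ i
    · have hab : 0 < a ∧ a ≤ i ∧ 0 < b ∧ b ≤ i := by
        rcases hin with ha | hb
        · exact ⟨ha.1, ha.2, closed ha.1 ha.2 h⟩
        · have := closed hb.1 hb.2 (hr.symm h); omega
      refine .inr (.inl ⟨hab.1, hab.2.2.1, ?_, by omega, by omega⟩)
      rwa [Nat.sub_add_cancel hab.1, Nat.sub_add_cancel hab.2.2.1]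
    · by_cases h00 : a = 0 ∧ b = 0
      · exact .inl h00
      · exact .inr (.inr ⟨by omega, by omega,
          (hr.rel_sub_add_iff (rel_zero (by omega)) (by omega) (by omega)).2 h⟩)

theorem firstPartner_glue (h₂ : IsPartitionRel (n - i) r₂) (hi : i ≤ n) :
    firstPartner n (glue i r₁ r₂) = i + 1 := by
  apply le_antisymm
  · rcases hi.lt_or_eq with hi | rfl
    · refine firstPartner_le_of_rel i.succ_pos (.inr (.inr ⟨.inl rfl, .inr i.lt_succ_self, ?_⟩))
      simpa using h₂.refl 0 (by omega)
    · exact firstPartner_le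
  · obtain ⟨hpos, h | h⟩ := firstPartner_spec (n := n) (r := glue i r₁ r₂)
    · rcases h with h | h | h <;> omega
    · omega

theorem innerRel_glue (h₁ : IsPartitionRel i r₁) : innerRel i (glue i r₁ r₂) = r₁ := by
  funext x y
  apply propext
  simp only [innerRel, glue, Nat.add_sub_cancel]
  constructor
  · rintro ⟨⟨hx, -⟩ | ⟨-, -, h⟩ | ⟨hx, -, -⟩, hxi, -⟩
    · omega
    · exact h
    · omega
  · intro h
    exact ⟨.inr (.inl ⟨x.succ_pos, y.succ_pos, h⟩), h₁.lt h⟩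

theorem outerRel_glue (h₁ : IsPartitionRel i r₁) : outerRel i (glue i r₁ r₂) = r₂ := by
  funext x y
  apply propext
  simp only [outerRel, glue, Nat.add_sub_cancel]
  constructor
  · rintro (⟨hx, -⟩ | ⟨-, -, h⟩ | ⟨-, -, h⟩)
    · omega
    · have := h₁.lt h; omega
    · exact h
  · exact fun h => .inr (.inr ⟨.inr (by omega), .inr (by omega), h⟩)

def splitEquiv (hi : i ≤ n) :
    {r : NonCrossingRel (n + 1) // firstPartner n r.1 = i + 1} ≃
      NonCrossingRel i × NonCrossingRel (n - i) where
  toFun r := (⟨innerRel i r.1.1, r.1.2.1.innerRel hi, r.1.2.2.innerRel⟩,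
    ⟨outerRel i r.1.1, r.1.2.1.outerRel, r.1.2.2.outerRel⟩)
  invFun p := ⟨⟨glue i p.1.1 p.2.1, p.1.2.1.glue p.2.2.1 hi,
    IsNonCrossingRel.glue p.1.2.1 p.2.2.1 p.1.2.2 p.2.2.2⟩, firstPartner_glue p.2.2.1 hi⟩
  left_inv r := Subtype.ext <| Subtype.ext <| glue_innerRel_outerRel r.1.2.1 r.1.2.2 r.2
  right_inv p :=
    Prod.ext (Subtype.ext (innerRel_glue p.1.2.1)) (Subtype.ext (outerRel_glue p.1.2.1))

end Split

theorem card_nonCrossingRel_succ (n : ℕ) :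
    Nat.card (NonCrossingRel (n + 1)) =
      ∑ i : Fin (n + 1), Nat.card (NonCrossingRel i) * Nat.card (NonCrossingRel (n - i)) := by
  let splitIndex (r : NonCrossingRel (n + 1)) : Fin (n + 1) :=
    ⟨firstPartner n r.1 - 1, by have := firstPartner_le (n := n) (r := r.1); omega⟩
  rw [← Nat.card_congr (Equiv.sigmaFiberEquiv splitIndex), Nat.card_sigma]
  refine Finset.sum_congr rfl fun i _ => ?_
  rw [← Nat.card_prod]
  refine Nat.card_congr ((Equiv.subtypeEquivRight fun r => ?_).trans (splitEquiv i.is_le))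
  have := (firstPartner_spec (n := n) (r := r.1)).1
  simp only [splitIndex, Fin.ext_iff]
  omega

theorem card_nonCrossingRel (n : ℕ) : Nat.card (NonCrossingRel n) = catalan n := by
  induction n using Nat.strong_induction_on with
  | _ n ih =>
    cases n with
    | zero => rw [card_nonCrossingRel_zero, catalan_zero]
    | succ n =>
      rw [card_nonCrossingRel_succ, catalan_succ]
      exact Finset.sum_congr rfl fun i _ => by rw [ih i (by omega), ih (n - i) (by omega)]

/-- The number of non-crossing partitions of `{1,…,n}` is the Catalan number
`(1/(n+1))·C(2n,n)`. -/
theorem card_noncrossing_eq_catalan (n : ℕ) :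
    (Nat.card {p : Fin n → Finset (Fin n) // IsPartitionFun n p ∧ IsNonCrossingFun n p} : ℚ)
      = (1 / ((n : ℚ) + 1)) * ((2 * n).choose n) := by
  rw [Nat.card_congr (nonCrossingRelEquiv n), card_nonCrossingRel]
  have h : ((n : ℚ) + 1) * catalan n = (2 * n).choose n := by
    exact_mod_cast succ_mul_catalan_eq_centralBinom n
  field_simp
  linarith
end
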